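/- arXiv:1802.09279 — 3 statements merged into one kernel-verified Lean document; each statement's English description precedes it below -/
import Mathlib

section
/- Let b > 1 and M > ζ(b) be real numbers, let k₀, k₂ ≥ 0 be integers, let σ₁ > σ₁' > 0, 0 < σ₂ < σ₂' and σ₃ > 0 be real numbers, and let H = {z ∈ ℂ : c ≤ Im z ≤ d, Re z ≤ 0} be a closed horizontal strip. Then there exists a constant Č > 0, depending only on k₀, k₂, σ₁, σ₁', σ₂, σ₂', σ₃, M and b (independent of ε, β and v), such that for every ε ∈ ℂ with ε ≠ 0, every integer β ≥ 0, every real N ≥ 0 and every function v : ℂ → ℂ satisfying |v(τ)| ≤ N |τ| exp((σ₁'/|ε|) r_b(β) |τ| − σ₂' s_b(β) exp(σ₃ |τ|)) for all τ ∈ H, one has |τ^{k₀} exp(−k₂ τ) v(τ)| ≤ Č |ε|^{k₀} N |τ| exp((σ₁/|ε|) r_b(β) |τ| − σ₂ s_b(β) exp(σ₃ |τ|)) for all τ ∈ H. -/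
/-- `r_b(β) = Σ_{n=0}^{β} 1/(n+1)^b`. -/
noncomputable def rb (b : ℝ) (β : ℕ) : ℝ := ∑ n ∈ Finset.range (β + 1), 1 / ((n : ℝ) + 1) ^ b

/-- `ζ(b) = Σ_{n=0}^{∞} 1/(n+1)^b`. -/
noncomputable def zetab (b : ℝ) : ℝ := ∑' n : ℕ, 1 / ((n : ℝ) + 1) ^ b

/-- The closed horizontal strip `{z : c ≤ Im z ≤ d, Re z ≤ 0}`. -/
def strip (c d : ℝ) : Set ℂ := {z : ℂ | c ≤ z.im ∧ z.im ≤ d ∧ z.re ≤ 0}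

/-!
The factor `|τ|^{k₀}` is absorbed by the gap `σ₁ - σ₁'` in the linear exponent, via
`y^k ≤ k! e^y` with `y = (σ₁ - σ₁')|τ|/|ε|`; this produces the factor `|ε|^{k₀}`, and `r_b(β) ≥ 1`
makes the bound uniform in `β`. The factor `e^{k₂|τ|}` is absorbed by the gap `σ₂' - σ₂` in the
double exponential: `k₂ x ≤ k₂²/(2κσ₃²) + κ (σ₃ x)²/2 ≤ k₂²/(2κσ₃²) + κ e^{σ₃ x}` with
`κ = (σ₂' - σ₂)(M - ζ(b))`, which bounds `(σ₂' - σ₂) s_b(β)` from below uniformly in `β` because `r_b(β) ≤ ζ(b)`.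
-/

open Real Nat

lemma one_le_rb (b : ℝ) (β : ℕ) : 1 ≤ rb b β := by
  calc (1 : ℝ) = 1 / (((0 : ℕ) : ℝ) + 1) ^ b := by norm_num
    _ ≤ rb b β :=
      Finset.single_le_sum (f := fun n : ℕ => 1 / ((n : ℝ) + 1) ^ b)
        (fun _ _ => by positivity) (by simp)

lemma rb_le_zetab {b : ℝ} (hb : 1 < b) (β : ℕ) : rb b β ≤ zetab b := by
  have hsum : Summable (fun n : ℕ => 1 / ((n : ℝ) + 1) ^ b) := by
    simpa using (summable_nat_add_iff 1).mpr (Real.summable_one_div_nat_rpow.mpr hb)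
  exact hsum.sum_le_tsum _ (fun _ _ => by positivity)

lemma pow_le_factorial_div_pow_mul_exp (k : ℕ) {t x : ℝ} (ht : 0 < t) (hx : 0 ≤ x) :
    x ^ k ≤ k ! / t ^ k * exp (t * x) := by
  have h := pow_div_factorial_le_exp _ (mul_nonneg ht.le hx) k
  rw [div_le_iff₀ (by positivity), mul_pow] at h
  rw [div_mul_eq_mul_div, le_div_iff₀ (by positivity)]
  linarith

lemma mul_le_sq_div_add_mul_exp (k : ℝ) {κ σ x : ℝ} (hκ : 0 < κ) (hσ : 0 < σ) (hx : 0 ≤ x) :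
    k * x ≤ k ^ 2 / (2 * κ * σ ^ 2) + κ * exp (σ * x) := by
  have hexp : (σ * x) ^ 2 / 2 ≤ exp (σ * x) := by
    nlinarith [quadratic_le_exp_of_nonneg (mul_nonneg hσ.le hx)]
  have hAMGM : k * x ≤ k ^ 2 / (2 * κ * σ ^ 2) + κ * ((σ * x) ^ 2 / 2) := by
    rw [div_add' _ _ _ (by positivity), le_div_iff₀ (by positivity)]
    nlinarith [sq_nonneg (k - κ * σ ^ 2 * x)]
  nlinarith

lemma pow_mul_exp_le {σ σ' a r x : ℝ} (k : ℕ) (hσ : σ' < σ) (ha : 0 < a) (hr : 1 ≤ r)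
    (hx : 0 ≤ x) :
    x ^ k * exp (σ' / a * r * x) ≤ k ! / (σ - σ') ^ k * a ^ k * exp (σ / a * r * x) := by
  have ht : 0 < (σ - σ') / a := div_pos (sub_pos.2 hσ) ha
  have hexp : (σ - σ') / a * x + σ' / a * r * x ≤ σ / a * r * x := by
    have : (σ - σ') / a * x ≤ (σ - σ') / a * x * r := le_mul_of_one_le_right (by positivity) hr
    have : σ / a * r * x = (σ - σ') / a * x * r + σ' / a * r * x := by ring
    linarith
  calc x ^ k * exp (σ' / a * r * x)
      ≤ k ! / ((σ - σ') / a) ^ k * exp ((σ - σ') / a * x) * exp (σ' / a * r * x) := by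
        gcongr; exact pow_le_factorial_div_pow_mul_exp k ht hx
    _ = k ! / (σ - σ') ^ k * a ^ k * exp ((σ - σ') / a * x + σ' / a * r * x) := by
        rw [exp_add, div_pow, div_div_eq_mul_div]; ring
    _ ≤ k ! / (σ - σ') ^ k * a ^ k * exp (σ / a * r * x) := by gcongr

lemma exp_mul_sub_mul_exp_le (k : ℝ) {σ₂ σ₂' σ₃ m s x : ℝ} (hσ₂ : σ₂ < σ₂') (hσ₃ : 0 < σ₃)
    (hm : 0 < m) (hms : m ≤ s) (hx : 0 ≤ x) :
    k * x - σ₂' * s * exp (σ₃ * x) ≤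
      k ^ 2 / (2 * ((σ₂' - σ₂) * m) * σ₃ ^ 2) - σ₂ * s * exp (σ₃ * x) := by
  have hκ : 0 < (σ₂' - σ₂) * m := mul_pos (sub_pos.2 hσ₂) hm
  have hkx := mul_le_sq_div_add_mul_exp k hκ hσ₃ hx
  have : (σ₂' - σ₂) * m * exp (σ₃ * x) ≤ (σ₂' - σ₂) * s * exp (σ₃ * x) := by
    gcongr
  linarith

lemma pow_mul_exp_mul_exp_le (k₀ : ℕ) (k₂ : ℝ) {σ₁ σ₁' σ₂ σ₂' σ₃ a r m s x : ℝ}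
    (hσ₁ : σ₁' < σ₁) (hσ₂ : σ₂ < σ₂') (hσ₃ : 0 < σ₃) (ha : 0 < a) (hr : 1 ≤ r)
    (hm : 0 < m) (hms : m ≤ s) (hx : 0 ≤ x) :
    x ^ k₀ * exp (k₂ * x) * exp (σ₁' / a * r * x - σ₂' * s * exp (σ₃ * x)) ≤
      k₀ ! / (σ₁ - σ₁') ^ k₀ * exp (k₂ ^ 2 / (2 * ((σ₂' - σ₂) * m) * σ₃ ^ 2)) * a ^ k₀ *
        exp (σ₁ / a * r * x - σ₂ * s * exp (σ₃ * x)) := by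
  have hpow := pow_mul_exp_le k₀ hσ₁ ha hr hx
  have hdouble := exp_le_exp.2 (exp_mul_sub_mul_exp_le k₂ hσ₂ hσ₃ hm hms hx)
  calc x ^ k₀ * exp (k₂ * x) * exp (σ₁' / a * r * x - σ₂' * s * exp (σ₃ * x))
      = x ^ k₀ * exp (σ₁' / a * r * x) * exp (k₂ * x - σ₂' * s * exp (σ₃ * x)) := by
        rw [exp_sub, exp_sub]; ring
    _ ≤ k₀ ! / (σ₁ - σ₁') ^ k₀ * a ^ k₀ * exp (σ₁ / a * r * x) *
          exp (k₂ ^ 2 / (2 * ((σ₂' - σ₂) * m) * σ₃ ^ 2) - σ₂ * s * exp (σ₃ * x)) := by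
        gcongr
    _ = _ := by rw [exp_sub, exp_sub]; ring

theorem stmt5_general (b M : ℝ) (hb : 1 < b) (hM : zetab b < M)
    (k₀ k₂ : ℕ) (σ₁ σ₁' σ₂ σ₂' σ₃ : ℝ)
    (hσ₁ : σ₁' < σ₁) (hσ₂' : σ₂ < σ₂') (hσ₃ : 0 < σ₃) :
    ∃ Cc : ℝ, 0 < Cc ∧ ∀ c d : ℝ, c < d →
      ∀ (ε : ℂ), ε ≠ 0 → ∀ β : ℕ, ∀ N : ℝ, 0 ≤ N →
      ∀ v : ℂ → ℂ,
        (∀ τ ∈ strip c d, ‖v τ‖ ≤ N * ‖τ‖ *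
          Real.exp (σ₁' / ‖ε‖ * rb b β * ‖τ‖
            - σ₂' * (M - rb b β) * Real.exp (σ₃ * ‖τ‖))) →
        ∀ τ ∈ strip c d,
          ‖τ ^ k₀ * Complex.exp (-(k₂ : ℂ) * τ) * v τ‖ ≤
            Cc * ‖ε‖ ^ k₀ * N * ‖τ‖ *
              Real.exp (σ₁ / ‖ε‖ * rb b β * ‖τ‖
                - σ₂ * (M - rb b β) * Real.exp (σ₃ * ‖τ‖)) := by
  have hm : 0 < M - zetab b := sub_pos.2 hM
  refine ⟨k₀ ! / (σ₁ - σ₁') ^ k₀ * exp (k₂ ^ 2 / (2 * ((σ₂' - σ₂) * (M - zetab b)) * σ₃ ^ 2)),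
    by have := sub_pos.2 hσ₁; positivity, ?_⟩
  intro c d _ ε hε β N hN v hv τ hτ
  have hms : M - zetab b ≤ M - rb b β := by linarith [rb_le_zetab hb β]
  have hcexp : ‖Complex.exp (-(k₂ : ℂ) * τ)‖ ≤ exp (k₂ * ‖τ‖) := by
    simpa using Complex.norm_exp_le_exp_norm (-(k₂ : ℂ) * τ)
  have hscalar := pow_mul_exp_mul_exp_le k₀ k₂ hσ₁ hσ₂' hσ₃ (norm_pos_iff.2 hε)
    (one_le_rb b β) hm hms (norm_nonneg τ)
  calc ‖τ ^ k₀ * Complex.exp (-(k₂ : ℂ) * τ) * v τ‖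
      ≤ ‖τ‖ ^ k₀ * exp (k₂ * ‖τ‖) * (N * ‖τ‖ * exp (σ₁' / ‖ε‖ * rb b β * ‖τ‖
          - σ₂' * (M - rb b β) * exp (σ₃ * ‖τ‖))) := by
        rw [norm_mul, norm_mul, norm_pow]
        gcongr
        exact hv τ hτ
    _ = N * ‖τ‖ * (‖τ‖ ^ k₀ * exp (k₂ * ‖τ‖) * exp (σ₁' / ‖ε‖ * rb b β * ‖τ‖
          - σ₂' * (M - rb b β) * exp (σ₃ * ‖τ‖))) := by ring
    _ ≤ _ := (mul_le_mul_of_nonneg_left hscalar (by positivity)).trans_eq (by ring)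

/-- The constant `Cc` depends only on `k₀, k₂, σ₁, σ₁', σ₂, σ₂', σ₃, M, b`; it is
independent of the strip, `ε`, `β` and `v`. -/
theorem stmt5 (b M : ℝ) (hb : 1 < b) (hM : zetab b < M)
    (k₀ k₂ : ℕ) (σ₁ σ₁' σ₂ σ₂' σ₃ : ℝ)
    (hσ₁' : 0 < σ₁') (hσ₁ : σ₁' < σ₁) (hσ₂ : 0 < σ₂) (hσ₂' : σ₂ < σ₂') (hσ₃ : 0 < σ₃) :
    ∃ Cc : ℝ, 0 < Cc ∧ ∀ c d : ℝ, c < d →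
      ∀ (ε : ℂ), ε ≠ 0 → ∀ β : ℕ, ∀ N : ℝ, 0 ≤ N →
      ∀ v : ℂ → ℂ,
        (∀ τ ∈ strip c d, ‖v τ‖ ≤ N * ‖τ‖ *
          Real.exp (σ₁' / ‖ε‖ * rb b β * ‖τ‖
            - σ₂' * (M - rb b β) * Real.exp (σ₃ * ‖τ‖))) →
        ∀ τ ∈ strip c d,
          ‖τ ^ k₀ * Complex.exp (-(k₂ : ℂ) * τ) * v τ‖ ≤
            Cc * ‖ε‖ ^ k₀ * N * ‖τ‖ *
              Real.exp (σ₁ / ‖ε‖ * rb b β * ‖τ‖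
                - σ₂ * (M - rb b β) * Real.exp (σ₃ * ‖τ‖)) :=
  stmt5_general b M hb hM k₀ k₂ σ₁ σ₁' σ₂ σ₂' σ₃ hσ₁ hσ₂' hσ₃
end

section
/- Let b > 1 and M > ζ(b) be real numbers, σ₁, σ₂, σ₃ > 0 and δ > 0 real numbers, and let k₀, k₂ ≥ 0 and k₁ ≥ 1 be integers satisfying k₁ ≥ b k₀ + b k₂/σ₃. Let H = {z ∈ ℂ : c ≤ Im z ≤ d, Re z ≤ 0} be a closed horizontal strip. Then there exists a constant C₁ > 0, depending only on k₀, k₁, k₂, σ₁, σ₂, σ₃ and b (independent of ε and δ), such that for every ε ∈ ℂ with ε ≠ 0 and every sequence (v_β)_{β≥0} of functions v_β : ℂ → ℂ, the following inequality holds in the extended nonnegative reals [0,∞]: Σ_{β≥k₁} ( sup_{τ∈H} (|τ^{k₀} exp(−k₂ τ) v_{β−k₁}(τ)| / |τ|) · exp(−(σ₁/|ε|) r_b(β) |τ| + σ₂ s_b(β) exp(σ₃ |τ|)) ) · δ^β/β! ≤ C₁ |ε|^{k₀} δ^{k₁} · Σ_{β≥0} ( sup_{τ∈H} (|v_β(τ)|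 / |τ|) · exp(−(σ₁/|ε|) r_b(β) |τ| + σ₂ s_b(β) exp(σ₃ |τ|)) ) · δ^β/β!, where all suprema and sums are taken in [0,∞]. -/
/-!
Passing from the coefficient of index `m` to that of index `m + k₁` multiplies the weight by
`exp (-(σ₁/|ε|) Δ |τ| - σ₂ Δ exp (σ₃ |τ|))`, where `Δ = r_b(m + k₁) - r_b(m) ≥ (m + k₁ + 1)^{-b}`.
Writing `exp (k₂ |τ|) = exp (σ₃ |τ|)^{k₂/σ₃}` and using `y^q ≤ (q/a)^q exp (a y)` twice, this
factor absorbs `|τ|^{k₀} exp (k₂ |τ|)` at the cost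
`C |ε|^{k₀} Δ^{-(k₀ + k₂/σ₃)} ≤ C |ε|^{k₀} (m + k₁ + 1)^{k₁}`, by the hypothesis on `k₁`.
Finally `(m + k₁ + 1)^{k₁} / (m + k₁)! ≤ (k₁ + 1)^{k₁} / m!`.
-/

open scoped ENNReal

open Real Nat

theorem Real.rpow_le_div_rpow_mul_exp {q a y : ℝ} (hq : 0 ≤ q) (ha : 0 < a) (hy : 0 ≤ y) :
    y ^ q ≤ (q / a) ^ q * exp (a * y) := by
  rcases hq.eq_or_lt with rfl | hq
  · simpa using one_le_exp (by positivity)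
  have ht : 0 ≤ a * y / q := by positivity
  calc y ^ q = (q / a) ^ q * (a * y / q) ^ q := by
        rw [← mul_rpow (by positivity) ht]; field_simp
    _ ≤ (q / a) ^ q * exp (a * y / q) ^ q := by
        gcongr; linarith [add_one_le_exp (a * y / q)]
    _ = (q / a) ^ q * exp (a * y) := by rw [← exp_mul, div_mul_cancel₀ _ hq.ne']

theorem Real.div_rpow_self_pos {x a : ℝ} (hx : 0 ≤ x) (ha : 0 < a) : 0 < (x / a) ^ x := by
  rcases hx.eq_or_lt with rfl | hx
  · simp
  · exact rpow_pos_of_pos (div_pos hx ha) x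

theorem rpow_mul_exp_mul_exp_neg_le {p k σ a c t x : ℝ} (hp : 0 ≤ p) (hk : 0 ≤ k) (hσ : 0 < σ)
    (ha : 0 < a) (hc : 0 < c) (ht : 0 < t) (hx : 0 ≤ x) :
    x ^ p * exp (k * x) * exp (-(a * t * x) - c * t * exp (σ * x)) ≤
      (p / a) ^ p * (k / σ / c) ^ (k / σ) * t⁻¹ ^ (p + k / σ) := by
  have hq : 0 ≤ k / σ := div_nonneg hk hσ.le
  have h₁ := rpow_le_div_rpow_mul_exp hp (mul_pos ha ht) hx
  have h₂ := rpow_le_div_rpow_mul_exp hq (mul_pos hc ht) (exp_nonneg (σ * x))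
  rw [← exp_mul, show σ * x * (k / σ) = k * x by field_simp] at h₂
  have hsplit : ∀ r s : ℝ, 0 ≤ r → 0 < s → (r / (s * t)) ^ r = (r / s) ^ r * t⁻¹ ^ r :=
    fun r s hr hs => by rw [← mul_rpow (by positivity) (by positivity)]; field_simp
  rw [hsplit p a hp ha] at h₁
  rw [hsplit _ c hq hc] at h₂
  have hcancel : exp (a * t * x) * exp (c * t * exp (σ * x)) *
      exp (-(a * t * x) - c * t * exp (σ * x)) = 1 := by
    rw [← exp_add, ← exp_add]; simp
  calc x ^ p * exp (k * x) * exp (-(a * t * x) - c * t * exp (σ * x))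
      ≤ (p / a) ^ p * t⁻¹ ^ p * exp (a * t * x) *
          ((k / σ / c) ^ (k / σ) * t⁻¹ ^ (k / σ) * exp (c * t * exp (σ * x))) *
          exp (-(a * t * x) - c * t * exp (σ * x)) := by gcongr
    _ = (p / a) ^ p * (k / σ / c) ^ (k / σ) * t⁻¹ ^ (p + k / σ) := by
      rw [rpow_add (inv_pos.mpr ht)]
      linear_combination (p / a) ^ p * (k / σ / c) ^ (k / σ) * t⁻¹ ^ p * t⁻¹ ^ (k / σ) * hcancel

theorem rb_sub_rb_ge (b : ℝ) {m n : ℕ} (hmn : m < n) :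
    (((n : ℝ) + 1) ^ b)⁻¹ ≤ rb b n - rb b m := by
  have hterm : ∀ i : ℕ, 0 ≤ 1 / ((i : ℝ) + 1) ^ b := fun i => by positivity
  have hle : rb b m ≤ ∑ i ∈ Finset.range n, 1 / ((i : ℝ) + 1) ^ b :=
    Finset.sum_le_sum_of_subset_of_nonneg (Finset.range_subset_range.mpr hmn)
      fun i _ _ => hterm i
  have hn : rb b n = ∑ i ∈ Finset.range n, 1 / ((i : ℝ) + 1) ^ b + ((n + 1 : ℝ) ^ b)⁻¹ := by
    rw [rb, Finset.sum_range_succ, one_div]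
  linarith

theorem inv_rpow_le_rpow_of_inv_le {Δ P b s k : ℝ} (hΔ : 0 < Δ) (hP : 1 ≤ P)
    (hΔP : Δ⁻¹ ≤ P ^ b) (hs : 0 ≤ s) (hbs : b * s ≤ k) : Δ⁻¹ ^ s ≤ P ^ k :=
  calc Δ⁻¹ ^ s ≤ (P ^ b) ^ s := rpow_le_rpow (inv_nonneg.mpr hΔ.le) hΔP hs
    _ = P ^ (b * s) := (rpow_mul (by linarith) b s).symm
    _ ≤ P ^ k := rpow_le_rpow_of_exponent_le hP hbs

theorem Nat.add_add_one_pow_mul_factorial_le (m k : ℕ) :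
    (m + k + 1) ^ k * m ! ≤ (k + 1) ^ k * (m + k)! :=
  calc (m + k + 1) ^ k * m ! ≤ ((k + 1) * (m + 1)) ^ k * m ! := by
        gcongr; nlinarith
    _ = (k + 1) ^ k * (m ! * (m + 1) ^ k) := by rw [mul_pow]; ring
    _ ≤ (k + 1) ^ k * (m + k)! := by gcongr; exact factorial_mul_pow_le_factorial

theorem add_add_one_pow_mul_pow_div_factorial_le {δ : ℝ} (hδ : 0 ≤ δ) (m k : ℕ) :
    ((m + k : ℕ) + 1 : ℝ) ^ k * (δ ^ (m + k) / (m + k)!) ≤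
      (k + 1) ^ k * δ ^ k * (δ ^ m / m !) := by
  have h : ((m + k + 1 : ℕ) : ℝ) ^ k * m ! ≤ ((k + 1 : ℕ) : ℝ) ^ k * (m + k)! := by
    exact_mod_cast Nat.add_add_one_pow_mul_factorial_le m k
  push_cast at h ⊢
  calc ((m : ℝ) + k + 1) ^ k * (δ ^ (m + k) / (m + k)!)
      = δ ^ (m + k) * (((m : ℝ) + k + 1) ^ k * m !) / ((m + k)! * m !) := by
        field_simp
    _ ≤ δ ^ (m + k) * (((k : ℝ) + 1) ^ k * (m + k)!) / ((m + k)! * m !) := by gcongr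
    _ = (k + 1) ^ k * δ ^ k * (δ ^ m / m !) := by
        field_simp; ring

theorem norm_pow_mul_exp_neg_le (τ : ℂ) (k₀ k₂ : ℕ) :
    ‖τ ^ k₀ * Complex.exp (-(k₂ : ℂ) * τ)‖ ≤ ‖τ‖ ^ k₀ * exp (k₂ * ‖τ‖) := by
  rw [norm_mul, norm_pow, Complex.norm_exp]
  gcongr
  have := (neg_le_abs τ.re).trans (Complex.abs_re_le_norm τ)
  simp only [neg_mul, Complex.neg_re, Complex.mul_re, Complex.natCast_re, Complex.natCast_im,
    zero_mul, sub_zero]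
  nlinarith [Nat.cast_nonneg (α := ℝ) k₂]

-- The weight of the `β`-th coefficient in the norm of `SED_{(σ,H,ε,δ)}`.
noncomputable def sedWeight (b σ₁ σ₂ σ₃ M : ℝ) (ε : ℂ) (β : ℕ) (τ : ℂ) : ℝ :=
  exp (-(σ₁ / ‖ε‖) * rb b β * ‖τ‖ + σ₂ * (M - rb b β) * exp (σ₃ * ‖τ‖))

noncomputable def sedSup (H : Set ℂ) (w : ℂ → ℝ) (f : ℂ → ℂ) : ℝ≥0∞ :=
  ⨆ τ ∈ H, ENNReal.ofReal (‖f τ‖ / ‖τ‖ * w τ)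

theorem sedSup_le_ofReal_mul {H : Set ℂ} {w w' : ℂ → ℝ} {f g : ℂ → ℂ} {L : ℝ} (hL : 0 ≤ L)
    (h : ∀ τ ∈ H, ‖f τ‖ / ‖τ‖ * w τ ≤ L * (‖g τ‖ / ‖τ‖ * w' τ)) :
    sedSup H w f ≤ ENNReal.ofReal L * sedSup H w' g := by
  refine iSup₂_le fun τ hτ => (ENNReal.ofReal_le_ofReal (h τ hτ)).trans ?_
  rw [ENNReal.ofReal_mul hL]
  gcongr
  exact le_iSup₂ (f := fun τ _ => ENNReal.ofReal (‖g τ‖ / ‖τ‖ * w' τ)) τ hτ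

section

variable {b σ₁ σ₂ σ₃ M : ℝ} {ε : ℂ}

theorem sedWeight_eq_exp_mul_sedWeight (m n : ℕ) (τ : ℂ) :
    sedWeight b σ₁ σ₂ σ₃ M ε n τ =
      exp (-(σ₁ / ‖ε‖ * (rb b n - rb b m) * ‖τ‖) - σ₂ * (rb b n - rb b m) * exp (σ₃ * ‖τ‖)) *
        sedWeight b σ₁ σ₂ σ₃ M ε m τ := by
  rw [sedWeight, sedWeight, ← exp_add]
  ring_nf

theorem norm_pow_mul_exp_mul_sedWeight_le (hσ₁ : 0 < σ₁) (hσ₂ : 0 < σ₂) (hσ₃ : 0 < σ₃)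
    (hε : ε ≠ 0) (k₀ k₂ : ℕ) {m n : ℕ} (hmn : rb b m < rb b n) (τ : ℂ) :
    ‖τ ^ k₀ * Complex.exp (-(k₂ : ℂ) * τ)‖ * sedWeight b σ₁ σ₂ σ₃ M ε n τ ≤
      (k₀ / σ₁) ^ (k₀ : ℝ) * (k₂ / σ₃ / σ₂) ^ (k₂ / σ₃) * ‖ε‖ ^ k₀ *
        (rb b n - rb b m)⁻¹ ^ (k₀ + k₂ / σ₃) * sedWeight b σ₁ σ₂ σ₃ M ε m τ := by
  have hA : 0 < ‖ε‖ := norm_pos_iff.mpr hε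
  have hdecay := rpow_mul_exp_mul_exp_neg_le (Nat.cast_nonneg (α := ℝ) k₀)
    (Nat.cast_nonneg (α := ℝ) k₂) hσ₃ (div_pos hσ₁ hA) hσ₂ (sub_pos.mpr hmn) (norm_nonneg τ)
  have hconst : ((k₀ : ℝ) / (σ₁ / ‖ε‖)) ^ (k₀ : ℝ) = (k₀ / σ₁) ^ (k₀ : ℝ) * ‖ε‖ ^ k₀ := by
    rw [div_div_eq_mul_div, mul_div_right_comm, mul_rpow (by positivity) hA.le, rpow_natCast ‖ε‖]
  rw [rpow_natCast ‖τ‖, hconst] at hdecay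
  calc ‖τ ^ k₀ * Complex.exp (-(k₂ : ℂ) * τ)‖ * sedWeight b σ₁ σ₂ σ₃ M ε n τ
      ≤ ‖τ‖ ^ k₀ * exp (k₂ * ‖τ‖) *
          exp (-(σ₁ / ‖ε‖ * (rb b n - rb b m) * ‖τ‖) - σ₂ * (rb b n - rb b m) * exp (σ₃ * ‖τ‖)) *
          sedWeight b σ₁ σ₂ σ₃ M ε m τ := by
        rw [sedWeight_eq_exp_mul_sedWeight m, ← mul_assoc]
        gcongr
        · exact (exp_pos _).le
        · exact norm_pow_mul_exp_neg_le τ k₀ k₂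
    _ ≤ (k₀ / σ₁) ^ (k₀ : ℝ) * ‖ε‖ ^ k₀ * (k₂ / σ₃ / σ₂) ^ (k₂ / σ₃) *
          (rb b n - rb b m)⁻¹ ^ (k₀ + k₂ / σ₃) * sedWeight b σ₁ σ₂ σ₃ M ε m τ :=
        mul_le_mul_of_nonneg_right hdecay (exp_pos _).le
    _ = _ := by ring

theorem norm_pow_mul_exp_mul_sedWeight_add_le (hσ₁ : 0 < σ₁) (hσ₂ : 0 < σ₂) (hσ₃ : 0 < σ₃)
    (hε : ε ≠ 0) {k₀ k₁ k₂ : ℕ} (hk₁ : 1 ≤ k₁) (hcond : b * k₀ + b * k₂ / σ₃ ≤ k₁) (m : ℕ)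
    (τ : ℂ) :
    ‖τ ^ k₀ * Complex.exp (-(k₂ : ℂ) * τ)‖ * sedWeight b σ₁ σ₂ σ₃ M ε (m + k₁) τ ≤
      (k₀ / σ₁) ^ (k₀ : ℝ) * (k₂ / σ₃ / σ₂) ^ (k₂ / σ₃) * ‖ε‖ ^ k₀ *
        ((m + k₁ : ℕ) + 1 : ℝ) ^ k₁ * sedWeight b σ₁ σ₂ σ₃ M ε m τ := by
  set P : ℝ := ((m + k₁ : ℕ) : ℝ) + 1
  set Δ := rb b (m + k₁) - rb b m
  have hP : 1 ≤ P := le_add_of_nonneg_left (Nat.cast_nonneg _)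
  have hΔ : (P ^ b)⁻¹ ≤ Δ := rb_sub_rb_ge b (by omega)
  have hΔpos : 0 < Δ := lt_of_lt_of_le (by positivity) hΔ
  have hΔP : Δ⁻¹ ^ ((k₀ : ℝ) + k₂ / σ₃) ≤ P ^ k₁ := by
    rw [← rpow_natCast]
    exact inv_rpow_le_rpow_of_inv_le hΔpos hP (inv_le_of_inv_le₀ (by positivity) hΔ)
      (by positivity) (by rw [mul_add, ← mul_div_assoc]; exact hcond)
  have hW : 0 ≤ sedWeight b σ₁ σ₂ σ₃ M ε m τ := (exp_pos _).le
  calc _ ≤ (k₀ / σ₁) ^ (k₀ : ℝ) * (k₂ / σ₃ / σ₂) ^ (k₂ / σ₃) * ‖ε‖ ^ k₀ *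
        Δ⁻¹ ^ ((k₀ : ℝ) + k₂ / σ₃) * sedWeight b σ₁ σ₂ σ₃ M ε m τ :=
        norm_pow_mul_exp_mul_sedWeight_le hσ₁ hσ₂ hσ₃ hε k₀ k₂ (sub_pos.mp hΔpos) τ
    _ ≤ _ := by gcongr

theorem sedSup_mul_ofReal_le {δ : ℝ} {k₀ k₁ k₂ : ℕ} (hσ₁ : 0 < σ₁) (hσ₂ : 0 < σ₂) (hσ₃ : 0 < σ₃)
    (hk₁ : 1 ≤ k₁) (hcond : b * k₀ + b * k₂ / σ₃ ≤ k₁) (hδ : 0 ≤ δ) (hε : ε ≠ 0) (H : Set ℂ)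
    (u : ℂ → ℂ) (m : ℕ) :
    sedSup H (sedWeight b σ₁ σ₂ σ₃ M ε (m + k₁))
        (fun τ => τ ^ k₀ * Complex.exp (-(k₂ : ℂ) * τ) * u τ) *
        ENNReal.ofReal (δ ^ (m + k₁) / (m + k₁)!) ≤
      ENNReal.ofReal ((k₀ / σ₁) ^ (k₀ : ℝ) * (k₂ / σ₃ / σ₂) ^ (k₂ / σ₃) * (k₁ + 1) ^ k₁ *
          ‖ε‖ ^ k₀ * δ ^ k₁) *
        (sedSup H (sedWeight b σ₁ σ₂ σ₃ M ε m) u * ENNReal.ofReal (δ ^ m / m !)) := by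
  set C₀ := ((k₀ : ℝ) / σ₁) ^ (k₀ : ℝ) * (k₂ / σ₃ / σ₂) ^ (k₂ / σ₃)
  set P : ℝ := ((m + k₁ : ℕ) : ℝ) + 1
  set S := sedSup H (sedWeight b σ₁ σ₂ σ₃ M ε m) u
  have hpt : ∀ τ ∈ H, ‖τ ^ k₀ * Complex.exp (-(k₂ : ℂ) * τ) * u τ‖ / ‖τ‖ *
      sedWeight b σ₁ σ₂ σ₃ M ε (m + k₁) τ ≤
        C₀ * ‖ε‖ ^ k₀ * P ^ k₁ * (‖u τ‖ / ‖τ‖ * sedWeight b σ₁ σ₂ σ₃ M ε m τ) := fun τ _ => by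
    have := mul_le_mul_of_nonneg_right
      (norm_pow_mul_exp_mul_sedWeight_add_le (M := M) hσ₁ hσ₂ hσ₃ hε hk₁ hcond m τ)
      (div_nonneg (norm_nonneg (u τ)) (norm_nonneg τ))
    rw [norm_mul, mul_div_assoc]
    linarith
  have hfac := add_add_one_pow_mul_pow_div_factorial_le hδ m k₁
  calc _ ≤ ENNReal.ofReal (C₀ * ‖ε‖ ^ k₀ * P ^ k₁) * S *
        ENNReal.ofReal (δ ^ (m + k₁) / (m + k₁)!) := by
        gcongr
        exact sedSup_le_ofReal_mul (by positivity) hpt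
    _ = S * ENNReal.ofReal (C₀ * ‖ε‖ ^ k₀ * (P ^ k₁ * (δ ^ (m + k₁) / (m + k₁)!))) := by
        rw [mul_comm _ S, mul_assoc, ← ENNReal.ofReal_mul (by positivity)]
        ring_nf
    _ ≤ S * ENNReal.ofReal (C₀ * ‖ε‖ ^ k₀ * ((k₁ + 1) ^ k₁ * δ ^ k₁ * (δ ^ m / m !))) := by
        gcongr
    _ = _ := by
        rw [mul_left_comm (ENNReal.ofReal _), ← ENNReal.ofReal_mul (by positivity)]
        ring_nf

end

theorem stmt9_general (b : ℝ)
    (σ₁ σ₂ σ₃ : ℝ) (hσ₁ : 0 < σ₁) (hσ₂ : 0 < σ₂) (hσ₃ : 0 < σ₃)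
    (k₀ k₁ k₂ : ℕ) (hk₁ : 1 ≤ k₁)
    (hcond : b * (k₀ : ℝ) + b * (k₂ : ℝ) / σ₃ ≤ (k₁ : ℝ)) :
    ∃ C₁ : ℝ, 0 < C₁ ∧ ∀ M : ℝ, zetab b < M → ∀ δ : ℝ, 0 < δ → ∀ c d : ℝ, c < d →
      ∀ (ε : ℂ), ε ≠ 0 → ∀ v : ℕ → ℂ → ℂ,
      (∑' m : ℕ,
        (⨆ τ ∈ strip c d, ENNReal.ofReal
          (‖τ ^ k₀ * Complex.exp (-(k₂ : ℂ) * τ) * v m τ‖ / ‖τ‖ *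
            Real.exp (-(σ₁ / ‖ε‖) * rb b (m + k₁) * ‖τ‖
              + σ₂ * (M - rb b (m + k₁)) * Real.exp (σ₃ * ‖τ‖)))) *
          ENNReal.ofReal (δ ^ (m + k₁) / (((m + k₁).factorial : ℕ) : ℝ))) ≤
      ENNReal.ofReal (C₁ * ‖ε‖ ^ k₀ * δ ^ k₁) *
        ∑' β : ℕ,
          (⨆ τ ∈ strip c d, ENNReal.ofReal
            (‖v β τ‖ / ‖τ‖ *
              Real.exp (-(σ₁ / ‖ε‖) * rb b β * ‖τ‖
                + σ₂ * (M - rb b β) * Real.exp (σ₃ * ‖τ‖)))) *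
            ENNReal.ofReal (δ ^ β / ((β.factorial : ℕ) : ℝ)) := by
  have hC₀ : 0 < ((k₀ : ℝ) / σ₁) ^ (k₀ : ℝ) * (k₂ / σ₃ / σ₂) ^ (k₂ / σ₃) :=
    mul_pos (div_rpow_self_pos (Nat.cast_nonneg k₀) hσ₁)
      (div_rpow_self_pos (div_nonneg (Nat.cast_nonneg k₂) hσ₃.le) hσ₂)
  refine ⟨_, mul_pos hC₀ (pow_pos (Nat.cast_add_one_pos k₁) k₁), ?_⟩
  intro M _ δ hδ c d _ ε hε v
  rw [← ENNReal.tsum_mul_left]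
  exact ENNReal.tsum_le_tsum fun m =>
    sedSup_mul_ofReal_le hσ₁ hσ₂ hσ₃ hk₁ hcond hδ.le hε (strip c d) (v m) m

/-- Boundedness of `v(τ,z) ↦ τ^{k₀} exp(-k₂ τ) ∂_z^{-k₁} v(τ,z)` on the space
`SED_{(σ,H,ε,δ)}`: the sum over `β ≥ k₁` is reindexed as `β = m + k₁`, so that the
coefficient multiplied is `v_{β - k₁} = v_m`.  All sums and suprema are in `[0,∞]`.
The constant `C₁` depends only on `k₀, k₁, k₂, σ₁, σ₂, σ₃, b`: it is independent of
`δ`, `M`, the strip, `ε` and `v`. -/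
theorem stmt9 (b : ℝ) (hb : 1 < b)
    (σ₁ σ₂ σ₃ : ℝ) (hσ₁ : 0 < σ₁) (hσ₂ : 0 < σ₂) (hσ₃ : 0 < σ₃)
    (k₀ k₁ k₂ : ℕ) (hk₁ : 1 ≤ k₁)
    (hcond : b * (k₀ : ℝ) + b * (k₂ : ℝ) / σ₃ ≤ (k₁ : ℝ)) :
    ∃ C₁ : ℝ, 0 < C₁ ∧ ∀ M : ℝ, zetab b < M → ∀ δ : ℝ, 0 < δ → ∀ c d : ℝ, c < d →
      ∀ (ε : ℂ), ε ≠ 0 → ∀ v : ℕ → ℂ → ℂ,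
      (∑' m : ℕ,
        (⨆ τ ∈ strip c d, ENNReal.ofReal
          (‖τ ^ k₀ * Complex.exp (-(k₂ : ℂ) * τ) * v m τ‖ / ‖τ‖ *
            Real.exp (-(σ₁ / ‖ε‖) * rb b (m + k₁) * ‖τ‖
              + σ₂ * (M - rb b (m + k₁)) * Real.exp (σ₃ * ‖τ‖)))) *
          ENNReal.ofReal (δ ^ (m + k₁) / (((m + k₁).factorial : ℕ) : ℝ))) ≤
      ENNReal.ofReal (C₁ * ‖ε‖ ^ k₀ * δ ^ k₁) *
        ∑' β : ℕ,
          (⨆ τ ∈ strip c d, ENNReal.ofReal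
            (‖v β τ‖ / ‖τ‖ *
              Real.exp (-(σ₁ / ‖ε‖) * rb b β * ‖τ‖
                + σ₂ * (M - rb b β) * Real.exp (σ₃ * ‖τ‖)))) *
            ENNReal.ofReal (δ ^ β / ((β.factorial : ℕ) : ℝ)) :=
  stmt9_general b σ₁ σ₂ σ₃ hσ₁ hσ₂ hσ₃ k₀ k₁ k₂ hk₁ hcond
end

section
/- Let b > 1 and σ₁ > 0 be real numbers and let γ₀, γ₁ ≥ 0 and γ₂ ≥ 1 be integers. Then there exists a constant C > 0, depending only on γ₀, γ₁, γ₂ and σ₁ (independent of ε, β, τ and v), such that for every ε ∈ ℂ with ε ≠ 0, every integer β ≥ γ₂, every real N ≥ 0, every τ ∈ ℂ, and every function v : ℂ → ℂ with u ↦ v(uτ) continuous on [0,1] and satisfying |v(uτ)| ≤ N |uτ| exp((σ₁/|ε|) r_b(β−γ₂) |uτ|) for all u ∈ [0,1], one has |τ| · | ∫_0^1 (τ − uτ)^{γ₀} (uτ)^{γ₁} v(uτ) · τ du | ≤ C |ε|^{γ₀+γ₁+2} (β+1)^{b(γ₀+γ₁+2)} N |τ| exp((σ₁/|ε|) r_b(β)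 |τ|). -/
/-!
Both factors of the kernel and the argument `uτ` of `v` have modulus at most `|τ|`, so the
integral is at most `N |τ|^k exp(A' |τ|)` with `k = γ₀ + γ₁ + 2` and `A' = (σ₁/|ε|) r_b(β - γ₂)`.
The polynomial factor is absorbed into an exponential, `x^k ≤ k! δ^{-k} e^{δ x}`, at the price
`δ = σ₁ / (|ε| (β+1)^b)`, which is exactly `σ₁/|ε|` times the last term of `r_b(β)`; since
`β - γ₂ < β`, the enlarged exponent `A' + δ` stays below `(σ₁/|ε|) r_b(β)`.
-/

open Finset

lemma rb_nonneg (b : ℝ) (β : ℕ) : 0 ≤ rb b β :=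
  sum_nonneg fun _ _ => by positivity

lemma rb_succ (b : ℝ) (β : ℕ) : rb b (β + 1) = rb b β + 1 / ((β + 1 : ℕ) + 1 : ℝ) ^ b :=
  sum_range_succ _ _

lemma rb_mono (b : ℝ) : Monotone (rb b) := fun _ _ h =>
  sum_le_sum_of_subset_of_nonneg (range_subset_range.2 (by omega)) fun _ _ _ => by positivity

lemma rb_sub_add_le {γ β : ℕ} (b : ℝ) (hγ : 1 ≤ γ) (hβ : γ ≤ β) :
    rb b (β - γ) + 1 / ((β : ℝ) + 1) ^ b ≤ rb b β := by
  obtain ⟨m, rfl⟩ : ∃ m, β = m + 1 := ⟨β - 1, by omega⟩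
  rw [rb_succ]
  gcongr
  exact rb_mono b (by omega)

lemma pow_le_factorial_div_pow_mul_exp_s11 {x δ : ℝ} (hx : 0 ≤ x) (hδ : 0 < δ) (k : ℕ) :
    x ^ k ≤ k.factorial / δ ^ k * Real.exp (δ * x) := by
  have h := Real.pow_div_factorial_le_exp (δ * x) (mul_nonneg hδ.le hx) k
  rw [div_le_iff₀ (by positivity)] at h
  rw [div_mul_eq_mul_div, le_div_iff₀ (by positivity)]
  linarith [mul_pow δ x k]

section Segment

variable {τ : ℂ} {u : ℝ}

lemma norm_ofReal_mul_le (hu : u ∈ Set.Icc (0 : ℝ) 1) : ‖(u : ℂ) * τ‖ ≤ ‖τ‖ := by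
  rw [norm_mul, Complex.norm_real, Real.norm_of_nonneg hu.1]
  exact mul_le_of_le_one_left (norm_nonneg τ) hu.2

lemma norm_sub_ofReal_mul_le (hu : u ∈ Set.Icc (0 : ℝ) 1) : ‖τ - (u : ℂ) * τ‖ ≤ ‖τ‖ := by
  have h1u : 1 - u ∈ Set.Icc (0 : ℝ) 1 := ⟨by linarith [hu.2], by linarith [hu.1]⟩
  have := norm_ofReal_mul_le (τ := τ) h1u
  rwa [Complex.ofReal_sub, Complex.ofReal_one, sub_mul, one_mul] at this

lemma norm_integral_segment_le {γ₀ γ₁ : ℕ} {N a : ℝ} {v : ℂ → ℂ} (hN : 0 ≤ N) (ha : 0 ≤ a)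
    (hv : ∀ u ∈ Set.Icc (0 : ℝ) 1,
      ‖v ((u : ℂ) * τ)‖ ≤ N * ‖(u : ℂ) * τ‖ * Real.exp (a * ‖(u : ℂ) * τ‖)) :
    ‖∫ u in (0 : ℝ)..1, (τ - (u : ℂ) * τ) ^ γ₀ * ((u : ℂ) * τ) ^ γ₁ * v ((u : ℂ) * τ) * τ‖ ≤
      N * ‖τ‖ ^ (γ₀ + γ₁ + 2) * Real.exp (a * ‖τ‖) := by
  have hbound : ∀ u ∈ Set.uIoc (0 : ℝ) 1,
      ‖(τ - (u : ℂ) * τ) ^ γ₀ * ((u : ℂ) * τ) ^ γ₁ * v ((u : ℂ) * τ) * τ‖ ≤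
        N * ‖τ‖ ^ (γ₀ + γ₁ + 2) * Real.exp (a * ‖τ‖) := by
    intro u hu
    rw [Set.uIoc_of_le zero_le_one] at hu
    have hu : u ∈ Set.Icc (0 : ℝ) 1 := Set.Ioc_subset_Icc_self hu
    have hs := norm_ofReal_mul_le (τ := τ) hu
    have hvτ : ‖v ((u : ℂ) * τ)‖ ≤ N * ‖τ‖ * Real.exp (a * ‖τ‖) :=
      (hv u hu).trans (by gcongr)
    calc _ = ‖τ - (u : ℂ) * τ‖ ^ γ₀ * ‖(u : ℂ) * τ‖ ^ γ₁ * ‖v ((u : ℂ) * τ)‖ * ‖τ‖ := by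
          simp only [norm_mul, norm_pow]
      _ ≤ ‖τ‖ ^ γ₀ * ‖τ‖ ^ γ₁ * (N * ‖τ‖ * Real.exp (a * ‖τ‖)) * ‖τ‖ := by
          gcongr
          exact norm_sub_ofReal_mul_le hu
      _ = N * ‖τ‖ ^ (γ₀ + γ₁ + 2) * Real.exp (a * ‖τ‖) := by ring
  simpa using intervalIntegral.norm_integral_le_of_norm_le_const hbound

end Segment

/-- Convolution bound along the segment `[0,τ]`, parametrized by `s = uτ`, `u ∈ [0,1]`.
The constant `C` depends only on `γ₀, γ₁, γ₂, σ₁`; it is independent of `b, ε, β, τ, v`. -/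
theorem stmt11 (σ₁ : ℝ) (hσ₁ : 0 < σ₁) (γ₀ γ₁ γ₂ : ℕ) (hγ₂ : 1 ≤ γ₂) :
    ∃ C : ℝ, 0 < C ∧ ∀ b : ℝ, 1 < b →
      ∀ (ε : ℂ), ε ≠ 0 → ∀ β : ℕ, γ₂ ≤ β → ∀ N : ℝ, 0 ≤ N → ∀ τ : ℂ,
      ∀ v : ℂ → ℂ,
        ContinuousOn (fun u : ℝ => v ((u : ℂ) * τ)) (Set.Icc 0 1) →
        (∀ u : ℝ, u ∈ Set.Icc (0 : ℝ) 1 →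
          ‖v ((u : ℂ) * τ)‖ ≤ N * ‖(u : ℂ) * τ‖ *
            Real.exp (σ₁ / ‖ε‖ * rb b (β - γ₂) * ‖(u : ℂ) * τ‖)) →
        ‖τ‖ * ‖∫ u in (0 : ℝ)..1,
            (τ - (u : ℂ) * τ) ^ γ₀ * ((u : ℂ) * τ) ^ γ₁ * v ((u : ℂ) * τ) * τ‖ ≤
          C * ‖ε‖ ^ (γ₀ + γ₁ + 2) *
            ((β : ℝ) + 1) ^ (b * ((γ₀ + γ₁ + 2 : ℕ) : ℝ)) *
            N * ‖τ‖ *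
            Real.exp (σ₁ / ‖ε‖ * rb b β * ‖τ‖) := by
  set k := γ₀ + γ₁ + 2
  refine ⟨k.factorial / σ₁ ^ k, by positivity, fun b _ ε hε β hβ N hN τ v _ hv => ?_⟩
  have hE : 0 < ‖ε‖ := norm_pos_iff.2 hε
  set P := ((β : ℝ) + 1) ^ b
  have hP : 0 < P := by positivity
  set δ := σ₁ / (‖ε‖ * P)
  have hδ : 0 < δ := by positivity
  have hint := norm_integral_segment_le (γ₀ := γ₀) (γ₁ := γ₁) hN (by have := rb_nonneg b (β - γ₂); positivity) hv
  have hexp : σ₁ / ‖ε‖ * rb b (β - γ₂) + δ ≤ σ₁ / ‖ε‖ * rb b β := by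
    calc _ = σ₁ / ‖ε‖ * (rb b (β - γ₂) + 1 / P) := by simp only [δ]; field_simp
      _ ≤ _ := by gcongr; exact rb_sub_add_le b hγ₂ hβ
  have hconst : (k.factorial / δ ^ k : ℝ) =
      k.factorial / σ₁ ^ k * ‖ε‖ ^ k * ((β : ℝ) + 1) ^ (b * (k : ℝ)) := by
    simp only [δ, P, div_pow, mul_pow, Real.rpow_mul_natCast (by positivity : (0 : ℝ) ≤ β + 1)]
    field_simp
  calc ‖τ‖ * ‖∫ u in (0 : ℝ)..1,
        (τ - (u : ℂ) * τ) ^ γ₀ * ((u : ℂ) * τ) ^ γ₁ * v ((u : ℂ) * τ) * τ‖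
      ≤ ‖τ‖ * (N * (k.factorial / δ ^ k * Real.exp (δ * ‖τ‖)) *
          Real.exp (σ₁ / ‖ε‖ * rb b (β - γ₂) * ‖τ‖)) := by
        grw [hint, pow_le_factorial_div_pow_mul_exp_s11 (norm_nonneg τ) hδ k]
    _ = k.factorial / δ ^ k * N * ‖τ‖ *
          Real.exp ((σ₁ / ‖ε‖ * rb b (β - γ₂) + δ) * ‖τ‖) := by
        rw [add_mul, Real.exp_add]; ring
    _ ≤ _ := by rw [hconst]; gcongr
end
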